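/- Let p ≥ 2, r = ⌈log₂(p−1)⌉, q with 0 ≤ q ≤ p−1, q_0 = q_1 integers 0 ≤ q_0, q_1 ≤ p−1, and r_1, r_2 ≥ 0 with r_1 + r_2 = r. For every m ≥ 2·binom(r_1+1,2) + 2·binom(r_2+1,2) + 2: forb(m, 3, F(p−q_0, p, p, p−q_1)) ≥ forb(m, 3, p·K_2) − min{q_0,q_1}·binom(r_1+1, 2) − max{q_0,q_1}·binom(r_2+1, 2). -/

import Mathlib

open Finset

/-- `F` is a configuration in the simple matrix `A` (columns of `A` form a finset):
there is an injection of rows such that the multiset `F` of columns is a sub-multiset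
of the restricted columns of `A`. -/
def ConfigIn {s k m : ℕ} (F : Multiset (Fin k → Fin s)) (A : Finset (Fin m → Fin s)) : Prop :=
  ∃ ρ : Fin k ↪ Fin m, F ≤ A.1.map (fun col => col ∘ ρ)

/-- The forbidden number: the maximum number of columns of an `m`-rowed simple
`s`-matrix avoiding `F` as a configuration. -/
noncomputable def forb (m s : ℕ) {k : ℕ} (F : Multiset (Fin k → Fin s)) : ℕ :=
  sSup {n : ℕ | ∃ A : Finset (Fin m → Fin s), ¬ ConfigIn F A ∧ A.card = n}

/-- The 2-rowed configuration with `a` columns (0,0), `b` columns (1,0),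
`c` columns (0,1) and `d` columns (1,1), viewed as a 3-matrix. -/
def Fabcd (a b c d : ℕ) : Multiset (Fin 2 → Fin 3) :=
  Multiset.replicate a ![0, 0] + Multiset.replicate b ![1, 0] +
  Multiset.replicate c ![0, 1] + Multiset.replicate d ![1, 1]

/-- `p` copies of `K₂`. -/
def pK2 (p : ℕ) : Multiset (Fin 2 → Fin 3) := Fabcd p p p p

/-- `p` copies of `I₂`. -/
def pI2 (p : ℕ) : Multiset (Fin 2 → Fin 3) := Fabcd 0 p p 0

/-!
Upper bound: a `pK₂`-avoider shows, on each pair of rows `i < j`, some `{0,1}`-pattern at most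
`p - 1` times. Deleting the columns that show these patterns costs at most `(p - 1) * C(m, 2)`
columns and leaves a matrix missing a `{0,1}`-pattern on every pair. Its columns with a given
support `S` (the rows where the entry is not `2`) form a `K₂`-free `0/1`-matrix on `S`, so there
are at most `|S| + 1` of them; summing over `S` gives `2 ^ m + m * 2 ^ (m - 1)`.

Lower bound for `F = Fabcd (p - q₀) p p (p - q₁)`: let `S₁` be the first `a` rows and `S₂` the
last `b` rows, and assign to each pair `i < j` the pattern `(0,0)` inside `S₁`, `(1,1)` inside `S₂`
and `(0,1)` otherwise. A base family of `2 ^ m + m * 2 ^ (m - 1)` columns shows no assigned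
pattern at all. For each pair, add one column fewer than `F` needs of the pair's pattern, each
showing that pattern on the pair and no assigned pattern elsewhere; the entries on `S₁ ∪ S₂` off
the pair range over two values, so `2 ^ (a + b - 2) ≥ p - 1` such columns exist. Pairs inside
`S₁` and `S₂` thus lose `q₀` and `q₁` columns each; take `(a, b) = (r₁ + 1, r₂ + 1)` when
`q₀ ≤ q₁` and swap them otherwise.
-/

def pairCount {m : ℕ} (A : Finset (Fin m → Fin 3)) (i j : Fin m) (u v : Fin 3) : ℕ :=
  #{c ∈ A | c i = u ∧ c j = v}

lemma pairCount_comm {m : ℕ} (A : Finset (Fin m → Fin 3)) (i j : Fin m) (u v : Fin 3) :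
    pairCount A i j u v = pairCount A j i v u := by
  simp only [pairCount, and_comm]

lemma count_map_comp_embedding {m : ℕ} (A : Finset (Fin m → Fin 3)) (ρ : Fin 2 ↪ Fin m)
    (g : Fin 2 → Fin 3) :
    (A.1.map (fun c => c ∘ ρ)).count g = pairCount A (ρ 0) (ρ 1) (g 0) (g 1) := by
  rw [Multiset.count_map, pairCount, card_def, filter_val]
  congr 1
  refine Multiset.filter_congr fun c _ => ?_
  rw [funext_iff, Fin.forall_fin_two, eq_comm, eq_comm (a := g 1)]
  rfl

lemma count_Fabcd (a b c d : ℕ) (u v : Fin 3) :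
    (Fabcd a b c d).count ![u, v] =
      if u = 0 ∧ v = 0 then a else if u = 1 ∧ v = 0 then b
      else if u = 0 ∧ v = 1 then c else if u = 1 ∧ v = 1 then d else 0 := by
  fin_cases u <;> fin_cases v <;> simp [Fabcd, Multiset.count_replicate]

lemma configIn_Fabcd_iff {m a b c d : ℕ} (A : Finset (Fin m → Fin 3)) :
    ConfigIn (Fabcd a b c d) A ↔
      ∃ i j : Fin m, i ≠ j ∧ a ≤ pairCount A i j 0 0 ∧ b ≤ pairCount A i j 1 0 ∧
        c ≤ pairCount A i j 0 1 ∧ d ≤ pairCount A i j 1 1 := by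
  simp only [ConfigIn, Multiset.le_iff_count, count_map_comp_embedding]
  constructor
  · rintro ⟨ρ, h⟩
    refine ⟨ρ 0, ρ 1, ρ.injective.ne (by decide), ?_, ?_, ?_, ?_⟩ <;>
      [have := h ![0, 0]; have := h ![1, 0]; have := h ![0, 1]; have := h ![1, 1]] <;>
      simpa [count_Fabcd] using this
  · rintro ⟨i, j, hij, h⟩
    let ρ : Fin 2 ↪ Fin m := ⟨![i, j], fun x y hxy => by
      fin_cases x <;> fin_cases y <;> simp_all [eq_comm]⟩
    refine ⟨ρ, fun g => ?_⟩
    obtain ⟨u, v, rfl⟩ : ∃ u v, g = ![u, v] := ⟨g 0, g 1, by ext x; fin_cases x <;> rfl⟩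
    rw [count_Fabcd, show ρ 0 = i from rfl, show ρ 1 = j from rfl]
    split_ifs <;> simp_all

lemma card_le_forb {m s k : ℕ} {F : Multiset (Fin k → Fin s)} {A : Finset (Fin m → Fin s)}
    (hA : ¬ ConfigIn F A) : #A ≤ forb m s F :=
  le_csSup ⟨s ^ m, by rintro n ⟨B, -, rfl⟩; simpa using B.card_le_univ⟩ ⟨A, hA, rfl⟩

lemma forb_le {m s k : ℕ} {F : Multiset (Fin k → Fin s)} {N : ℕ}
    (h : ∀ A : Finset (Fin m → Fin s), ¬ ConfigIn F A → #A ≤ N) : forb m s F ≤ N :=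
  csSup_le' <| by rintro n ⟨A, hA, rfl⟩; exact h A hA

def orderedPairs (m : ℕ) : Finset (Fin m × Fin m) := {e | e.1 < e.2}

lemma mem_orderedPairs {m : ℕ} {e : Fin m × Fin m} : e ∈ orderedPairs m ↔ e.1 < e.2 := by
  simp [orderedPairs]

lemma card_orderedPairs (m : ℕ) : #(orderedPairs m) = m.choose 2 := by
  simp [orderedPairs, Fintype.card_product_filter_lt]

lemma Fin.card_filter_val_lt_of_le {m a : ℕ} (ha : a ≤ m) : #{x : Fin m | (x : ℕ) < a} = a := by
  rw [Fin.card_filter_val_lt, min_eq_right ha]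

lemma Fin.card_filter_le_val {m b : ℕ} (hb : b ≤ m) : #{x : Fin m | m - b ≤ (x : ℕ)} = b := by
  simp only [← not_lt, filter_not, card_sdiff_of_subset (filter_subset _ _), card_univ,
    Fintype.card_fin, Fin.card_filter_val_lt]
  omega

lemma card_orderedPairs_filter_lt {m a : ℕ} (ha : a ≤ m) :
    #{e ∈ orderedPairs m | (e.2 : ℕ) < a} = a.choose 2 := by
  let S : Finset (Fin m) := {x | (x : ℕ) < a}
  calc _ = #{e ∈ S ×ˢ S | e.1 < e.2} := by
        congr 1
        ext e
        simp only [S, orderedPairs, mem_filter, mem_univ, true_and, mem_product, Fin.lt_def]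
        omega
    _ = _ := by rw [card_product_filter_lt, Fin.card_filter_val_lt_of_le ha]

lemma card_orderedPairs_filter_le {m b : ℕ} (hb : b ≤ m) :
    #{e ∈ orderedPairs m | m - b ≤ (e.1 : ℕ)} = b.choose 2 := by
  let S : Finset (Fin m) := {x | m - b ≤ (x : ℕ)}
  calc _ = #{e ∈ S ×ˢ S | e.1 < e.2} := by
        congr 1
        ext e
        simp only [S, orderedPairs, mem_filter, mem_univ, true_and, mem_product, Fin.lt_def]
        omega
    _ = _ := by rw [card_product_filter_lt, Fin.card_filter_le_val hb]

lemma sum_finset_card_add_one {α : Type*} [Fintype α] :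
    ∑ S : Finset α, (#S + 1) = 2 ^ Fintype.card α + Fintype.card α * 2 ^ (Fintype.card α - 1) := by
  rw [← powerset_univ, sum_powerset_apply_card (fun k => k + 1), card_univ]
  simp only [smul_eq_mul, mul_add, mul_one, sum_add_distrib, Nat.sum_range_choose,
    mul_comm _ (_ : ℕ)]
  rw [Nat.sum_range_mul_choose, add_comm]

lemma two_pow_card_le_card_piFinset {ι κ : Type*} [Fintype ι] [DecidableEq ι] {s : ι → Finset κ}
    {F : Finset ι} (hs : ∀ x, (s x).Nonempty) (hF : ∀ x ∈ F, 2 ≤ #(s x)) :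
    2 ^ #F ≤ #(Fintype.piFinset s) := by
  rw [Fintype.card_piFinset, ← prod_const]
  calc ∏ _ ∈ F, 2 ≤ ∏ x ∈ F, #(s x) := prod_le_prod' hF
    _ ≤ ∏ x, #(s x) :=
      prod_le_prod_of_subset_of_one_le' (subset_univ F) fun x _ _ => (hs x).card_pos

section UpperBound

variable {α : Type*}

lemma eq_of_update_eq_update [DecidableEq α] {β : Type*} {c d : α → β} {r : α} {w : β}
    (h : Function.update c r w = Function.update d r w) (hr : c r = d r) : c = d := by
  funext x
  by_cases hx : x = r
  · rw [hx, hr]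
  · simpa [hx] using congrFun h x

lemma eq_or_update_eq_of_update_eq [DecidableEq α] {c d : α → Fin 3} {r : α} (hc : c r ≠ 2)
    (hd : d r ≠ 2) (h : Function.update c r 2 = Function.update d r 2) :
    c = d ∨ (c r = 1 ∧ Function.update c r 0 = d) ∨ (d r = 1 ∧ Function.update d r 0 = c) := by
  have hupd {c d : α → Fin 3} (h : Function.update c r 2 = Function.update d r 2)
      (hd : d r = 0) : Function.update c r 0 = d :=
    eq_of_update_eq_update (r := r) (w := 2) (by rwa [Function.update_idem])
      (by rw [Function.update_self, hd])
  rcases (by omega : c r = 0 ∨ c r = 1) with h1 | h1 <;>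
    rcases (by omega : d r = 0 ∨ d r = 1) with h2 | h2
  · exact Or.inl (eq_of_update_eq_update h (h1.trans h2.symm))
  · exact Or.inr (Or.inr ⟨h2, hupd h.symm h1⟩)
  · exact Or.inr (Or.inl ⟨h1, hupd h h2⟩)
  · exact Or.inl (eq_of_update_eq_update h (h1.trans h2.symm))

/-- Otherwise `c`, `d` and their updates at `r` would show all four `{0,1}`-patterns on `r` and a
row where `c` and `d` differ. -/
lemma eq_of_update_mem [DecidableEq α] {S : Finset α} {T : Finset (α → Fin 3)}
    (hT : ∀ c ∈ T, ∀ x, c x ≠ 2 ↔ x ∈ S) {r : α}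
    (hmiss : ∀ x ∈ S, r ≠ x → ∃ u v : Fin 3, u ≠ 2 ∧ v ≠ 2 ∧ ∀ c ∈ T, ¬(c r = u ∧ c x = v))
    {c d : α → Fin 3} (hc : c ∈ T) (hd : d ∈ T) (hcr : c r = 1) (hdr : d r = 1)
    (hc₀ : Function.update c r 0 ∈ T) (hd₀ : Function.update d r 0 ∈ T) : c = d := by
  by_contra hcd
  obtain ⟨x, hx⟩ := Function.ne_iff.mp hcd
  have hxr : x ≠ r := fun h => hx (by rw [h, hcr, hdr])
  have hxS : x ∈ S := by
    by_contra h
    exact hx (by rw [not_ne_iff.mp (mt (hT c hc x).1 h), not_ne_iff.mp (mt (hT d hd x).1 h)])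
  obtain ⟨u, v, hu, hv, huv⟩ := hmiss x hxS (Ne.symm hxr)
  have hcx := (hT c hc x).2 hxS
  have hdx := (hT d hd x).2 hxS
  rcases (by omega : v = c x ∨ v = d x) with rfl | rfl <;>
    rcases (by omega : u = 0 ∨ u = 1) with rfl | rfl
  · exact huv _ hc₀ ⟨by simp, by simp [hxr]⟩
  · exact huv c hc ⟨hcr, rfl⟩
  · exact huv _ hd₀ ⟨by simp, by simp [hxr]⟩
  · exact huv d hd ⟨hdr, rfl⟩

lemma card_le_card_add_one_of_support {S : Finset α} {T : Finset (α → Fin 3)}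
    (hT : ∀ c ∈ T, ∀ x, c x ≠ 2 ↔ x ∈ S)
    (hmiss : ∀ i ∈ S, ∀ j ∈ S, i ≠ j →
      ∃ u v : Fin 3, u ≠ 2 ∧ v ≠ 2 ∧ ∀ c ∈ T, ¬(c i = u ∧ c j = v)) :
    #T ≤ #S + 1 := by
  classical
  induction S using Finset.induction_on generalizing T with
  | empty =>
    refine card_le_one.mpr fun c hc d hd => funext fun x => ?_
    have hc := hT c hc x
    have hd := hT d hd x
    simp_all
  | insert r S hr ih =>
    let f : (α → Fin 3) → α → Fin 3 := fun c => Function.update c r 2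
    let D := T.filter fun c => c r = 1 ∧ Function.update c r 0 ∈ T
    have hD : #D ≤ 1 := card_le_one.mpr fun c hc d hd => by
      simp only [D, mem_filter] at hc hd
      exact eq_of_update_mem hT (fun x hx hrx => hmiss r (mem_insert_self r S) x hx hrx)
        hc.1 hd.1 hc.2.1 hd.2.1 hc.2.2 hd.2.2
    have hinj : Set.InjOn f (T \ D : Finset _) := by
      intro c hc d hd hcd
      simp only [coe_sdiff, Set.mem_sdiff, mem_coe, D, mem_filter, not_and] at hc hd
      rcases eq_or_update_eq_of_update_eq ((hT c hc.1 r).2 (mem_insert_self r S))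
        ((hT d hd.1 r).2 (mem_insert_self r S)) hcd with h | ⟨h1, h2⟩ | ⟨h1, h2⟩
      · exact h
      · exact absurd (h2 ▸ hd.1) (hc.2 hc.1 h1)
      · exact absurd (h2 ▸ hc.1) (hd.2 hd.1 h1)
    have himage : #(T.image f) ≤ #S + 1 := by
      refine ih ?_ fun i hi j hj hij => ?_
      · simp only [mem_image]
        rintro _ ⟨c, hc, rfl⟩ x
        by_cases hx : x = r
        · subst hx; simp [f, hr]
        · simp only [f, Function.update_of_ne hx, hT c hc x, mem_insert, hx, false_or]
      · obtain ⟨u, v, hu, hv, huv⟩ :=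
          hmiss i (mem_insert_of_mem hi) j (mem_insert_of_mem hj) hij
        refine ⟨u, v, hu, hv, ?_⟩
        simp only [mem_image]
        rintro _ ⟨c, hc, rfl⟩
        simpa [f, Function.update_of_ne (ne_of_mem_of_not_mem hi hr),
          Function.update_of_ne (ne_of_mem_of_not_mem hj hr)] using huv c hc
    calc #T = #(T \ D) + #D := (card_sdiff_add_card_eq_card (filter_subset _ _)).symm
      _ = #((T \ D).image f) + #D := by rw [card_image_of_injOn hinj]
      _ ≤ #(T.image f) + 1 := add_le_add (card_le_card (image_subset_image sdiff_subset)) hD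
      _ ≤ #(insert r S) + 1 := by rw [card_insert_of_notMem hr]; omega

theorem card_le_of_forall_pair_missing [Fintype α] {A : Finset (α → Fin 3)}
    (hmiss : ∀ i j, i ≠ j → ∃ u v : Fin 3, u ≠ 2 ∧ v ≠ 2 ∧ ∀ c ∈ A, ¬(c i = u ∧ c j = v)) :
    #A ≤ 2 ^ Fintype.card α + Fintype.card α * 2 ^ (Fintype.card α - 1) := by
  classical
  let supp : (α → Fin 3) → Finset α := fun c => {x | c x ≠ 2}
  calc #A = ∑ S : Finset α, #{c ∈ A | supp c = S} :=
        card_eq_sum_card_fiberwise fun _ _ => mem_univ _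
    _ ≤ ∑ S : Finset α, (#S + 1) := by
        refine sum_le_sum fun S _ => card_le_card_add_one_of_support ?_ ?_
        · intro c hc x
          rw [mem_filter] at hc
          simp [← hc.2, supp]
        · intro i _ j _ hij
          obtain ⟨u, v, hu, hv, huv⟩ := hmiss i j hij
          exact ⟨u, v, hu, hv, fun c hc => huv c (mem_filter.mp hc).1⟩
    _ = _ := sum_finset_card_add_one

end UpperBound

lemma exists_pairCount_le_of_not_configIn_pK2 {m p : ℕ} {A : Finset (Fin m → Fin 3)}
    (hA : ¬ ConfigIn (pK2 p) A) {i j : Fin m} (hij : i ≠ j) :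
    ∃ uv : Fin 3 × Fin 3, uv.1 ≠ 2 ∧ uv.2 ≠ 2 ∧ pairCount A i j uv.1 uv.2 ≤ p - 1 := by
  rw [pK2, configIn_Fabcd_iff] at hA
  by_contra! h
  have hp (u v : Fin 3) (hu : u ≠ 2) (hv : v ≠ 2) : p ≤ pairCount A i j u v := by
    have : p - 1 < pairCount A i j u v := h (u, v) hu hv
    omega
  exact hA ⟨i, j, hij, hp 0 0 (by decide) (by decide), hp 1 0 (by decide) (by decide),
    hp 0 1 (by decide) (by decide), hp 1 1 (by decide) (by decide)⟩

theorem forb_pK2_le (m p : ℕ) :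
    forb m 3 (pK2 p) ≤ 2 ^ m + m * 2 ^ (m - 1) + (p - 1) * m.choose 2 := by
  refine forb_le fun A hA => ?_
  have hrare (i j : Fin m) : ∃ uv : Fin 3 × Fin 3,
      i < j → uv.1 ≠ 2 ∧ uv.2 ≠ 2 ∧ pairCount A i j uv.1 uv.2 ≤ p - 1 := by
    by_cases hij : i < j
    · obtain ⟨uv, h⟩ := exists_pairCount_le_of_not_configIn_pK2 hA hij.ne
      exact ⟨uv, fun _ => h⟩
    · exact ⟨(0, 0), fun h => absurd h hij⟩
  choose D hD using hrare
  let bad (e : Fin m × Fin m) : Finset (Fin m → Fin 3) :=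
    {c ∈ A | c e.1 = (D e.1 e.2).1 ∧ c e.2 = (D e.1 e.2).2}
  let U := (orderedPairs m).biUnion bad
  have hgood : #(A \ U) ≤ 2 ^ m + m * 2 ^ (m - 1) := by
    refine (card_le_of_forall_pair_missing fun i j hij => ?_).trans_eq (by simp)
    have hnot_bad {c} (hc : c ∈ A \ U) {e} (he : e ∈ orderedPairs m) : c ∉ bad e :=
      fun hce => (mem_sdiff.mp hc).2 (mem_biUnion.mpr ⟨e, he, hce⟩)
    rcases hij.lt_or_gt with h | h
    · obtain ⟨hu, hv, -⟩ := hD i j h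
      refine ⟨_, _, hu, hv, fun c hc hcij => hnot_bad hc (e := (i, j)) (mem_orderedPairs.mpr h) ?_⟩
      exact mem_filter.mpr ⟨(mem_sdiff.mp hc).1, hcij⟩
    · obtain ⟨hu, hv, -⟩ := hD j i h
      refine ⟨_, _, hv, hu, fun c hc hcij => hnot_bad hc (e := (j, i)) (mem_orderedPairs.mpr h) ?_⟩
      exact mem_filter.mpr ⟨(mem_sdiff.mp hc).1, hcij.symm⟩
  have hbad : #U ≤ (p - 1) * m.choose 2 :=
    calc #U ≤ ∑ e ∈ orderedPairs m, #(bad e) := card_biUnion_le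
      _ ≤ ∑ _e ∈ orderedPairs m, (p - 1) :=
        sum_le_sum fun e he => (hD e.1 e.2 (mem_orderedPairs.mp he)).2.2
      _ = (p - 1) * m.choose 2 := by rw [sum_const, card_orderedPairs, smul_eq_mul, mul_comm]
  calc #A ≤ #(A \ U) + #U := card_le_card_sdiff_add_card
    _ ≤ _ := by omega

namespace Avoider

variable {m : ℕ} (a b : ℕ)

/-- Here `S₁` is the set of rows `x < a` and `S₂` the set of rows `x ≥ m - b`. -/
def sig (i j : Fin m) : Fin 3 × Fin 3 :=
  if (j : ℕ) < a then (0, 0) else if m - b ≤ (i : ℕ) then (1, 1) else (0, 1)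

def Shows (c : Fin m → Fin 3) (i j : Fin m) : Prop :=
  i < j ∧ c i = (sig a b i j).1 ∧ c j = (sig a b i j).2

def band (t : ℕ) (x : Fin m) : Finset (Fin 3) :=
  if (x : ℕ) < t then {1, 2} else {0, 2}

/-- The threshold `max a (min k (m - b))` is `k` clamped to `[a, m - b]`. -/
def baseCells (k x : Fin m) : Finset (Fin 3) :=
  if x = k then {if (k : ℕ) < a then 0 else 1} else band (max a (min k (m - b))) x

def base : Finset (Fin m → Fin 3) :=
  Fintype.piFinset (band a) ∪ univ.biUnion fun k => Fintype.piFinset (baseCells a b k)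

def pairCells (i j x : Fin m) : Finset (Fin 3) :=
  if x = i then {(sig a b i j).1} else if x = j then {(sig a b i j).2}
  else if (x : ℕ) < a then {1, 2} else if m - b ≤ (x : ℕ) then {0, 2} else {2}

def avoider (P : Fin m × Fin m → Finset (Fin m → Fin 3)) : Finset (Fin m → Fin 3) :=
  base a b ∪ (orderedPairs m).biUnion P

/-- One column fewer than `Fabcd (p - q₀) p p (p - q₁)` needs of the pattern `sig a b i j`. -/
def cap (p q₀ q₁ : ℕ) (i j : Fin m) : ℕ :=
  if (j : ℕ) < a then p - 1 - q₀ else if m - b ≤ (i : ℕ) then p - 1 - q₁ else p - 1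

variable {a b}

lemma not_shows_of_mem_band {t : ℕ} (hat : a ≤ t) (htb : t ≤ m - b) {c : Fin m → Fin 3}
    (hc : c ∈ Fintype.piFinset (band t)) (i j : Fin m) : ¬ Shows a b c i j := by
  rintro ⟨hij, hi, hj⟩
  have hci := Fintype.mem_piFinset.mp hc i
  have hcj := Fintype.mem_piFinset.mp hc j
  rw [Fin.lt_def] at hij
  unfold band at hci hcj
  unfold sig at hi hj
  split_ifs at hci hcj hi hj <;> simp only [mem_insert, mem_singleton] at hci hcj hi hj <;> omega

lemma not_shows_of_mem_baseCells (hab : a + b ≤ m) {k : Fin m} {c : Fin m → Fin 3}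
    (hc : c ∈ Fintype.piFinset (baseCells a b k)) (i j : Fin m) : ¬ Shows a b c i j := by
  rintro ⟨hij, hi, hj⟩
  have hci := Fintype.mem_piFinset.mp hc i
  have hcj := Fintype.mem_piFinset.mp hc j
  rw [Fin.lt_def] at hij
  unfold baseCells band at hci hcj
  unfold sig at hi hj
  split_ifs at hci hcj hi hj <;> simp only [mem_insert, mem_singleton] at hci hcj hi hj <;> omega

lemma not_shows_of_mem_base (hab : a + b ≤ m) {c : Fin m → Fin 3} (hc : c ∈ base a b)
    (i j : Fin m) : ¬ Shows a b c i j := by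
  rcases mem_union.mp hc with hc | hc
  · exact not_shows_of_mem_band le_rfl (by omega) hc i j
  · obtain ⟨k, -, hk⟩ := mem_biUnion.mp hc
    exact not_shows_of_mem_baseCells hab hk i j

lemma shows_of_mem_pairCells {i j : Fin m} (hij : i < j) {c : Fin m → Fin 3}
    (hc : c ∈ Fintype.piFinset (pairCells a b i j)) : Shows a b c i j := by
  have hci := Fintype.mem_piFinset.mp hc i
  have hcj := Fintype.mem_piFinset.mp hc j
  simp only [pairCells, if_neg hij.ne', if_true, mem_singleton] at hci hcj
  exact ⟨hij, hci, hcj⟩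

lemma eq_of_shows_of_mem_pairCells (hab : a + b ≤ m) {i j : Fin m} (hij : i < j)
    {c : Fin m → Fin 3} (hc : c ∈ Fintype.piFinset (pairCells a b i j)) {x y : Fin m}
    (h : Shows a b c x y) : (x, y) = (i, j) := by
  obtain ⟨hxy, hx, hy⟩ := h
  have hcx := Fintype.mem_piFinset.mp hc x
  have hcy := Fintype.mem_piFinset.mp hc y
  rw [Fin.lt_def] at hxy hij
  unfold pairCells at hcx hcy
  unfold sig at hx hy hcx hcy
  rw [Prod.mk.injEq]
  split_ifs at hcx hcy hx hy <;> simp only [mem_insert, mem_singleton] at hcx hcy hx hy <;> omega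

lemma card_piFinset_band (t : ℕ) : #(Fintype.piFinset (band (m := m) t)) = 2 ^ m := by
  simp only [Fintype.card_piFinset, band, apply_ite card]
  simp

lemma card_piFinset_baseCells (k : Fin m) :
    #(Fintype.piFinset (baseCells a b k)) = 2 ^ (m - 1) := by
  rw [Fintype.card_piFinset, ← mul_prod_erase univ _ (mem_univ k)]
  rw [prod_congr rfl fun x hx => show #(baseCells a b k x) = 2 by
    simp only [baseCells, if_neg (ne_of_mem_erase hx), band]; split_ifs <;> rfl]
  simp [baseCells]

lemma disjoint_baseCells {k l : Fin m} (hkl : k < l) :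
    Disjoint (baseCells a b k l) (baseCells a b l l) := by
  rw [Fin.lt_def] at hkl
  simp only [baseCells, if_neg (Fin.ne_of_gt hkl), band]
  split_ifs <;> first | decide | omega

lemma disjoint_band_baseCells (k : Fin m) : Disjoint (band a k) (baseCells a b k k) := by
  simp only [baseCells, band]
  split_ifs <;> decide

lemma card_base : #(base (m := m) a b) = 2 ^ m + m * 2 ^ (m - 1) := by
  rw [base, card_union_of_disjoint, card_piFinset_band, card_biUnion]
  · simp only [card_piFinset_baseCells, sum_const, card_univ, Fintype.card_fin, smul_eq_mul]
  · intro k _ l _ hkl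
    rcases hkl.lt_or_gt with h | h
    · exact Fintype.piFinset_disjoint_of_disjoint _ _ (disjoint_baseCells h)
    · exact (Fintype.piFinset_disjoint_of_disjoint _ _ (disjoint_baseCells h)).symm
  · refine (disjoint_biUnion_right _ _ _).mpr fun k _ => ?_
    exact Fintype.piFinset_disjoint_of_disjoint _ _ (disjoint_band_baseCells k)

lemma two_pow_le_card_piFinset_pairCells (hab : a + b ≤ m) (i j : Fin m) :
    2 ^ (a + b - 2) ≤ #(Fintype.piFinset (pairCells a b i j)) := by
  let outer : Finset (Fin m) :=
    ({x : Fin m | (x : ℕ) < a} : Finset _) ∪ ({x : Fin m | m - b ≤ (x : ℕ)} : Finset _)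
  have houter : #outer = a + b := by
    rw [card_union_of_disjoint (disjoint_filter.mpr fun x _ h => by omega),
      Fin.card_filter_val_lt_of_le (by omega), Fin.card_filter_le_val (by omega)]
  have hfree : a + b - 2 ≤ #(outer \ {i, j}) :=
    calc a + b - 2 ≤ #outer - #({i, j} : Finset (Fin m)) := by
          have := card_le_two (a := i) (b := j); omega
      _ ≤ #(outer \ {i, j}) := le_card_sdiff _ _
  refine (Nat.pow_le_pow_right two_pos hfree).trans
    (two_pow_card_le_card_piFinset (fun x => ?_) fun x hx => ?_)
  · unfold pairCells; split_ifs <;> simp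
  · simp only [outer, mem_sdiff, mem_union, mem_filter, mem_univ, true_and, mem_insert,
      mem_singleton, not_or] at hx
    simp only [pairCells, if_neg hx.2.1, if_neg hx.2.2]
    split_ifs <;> first | rfl | omega

section Assembly

variable {P : Fin m × Fin m → Finset (Fin m → Fin 3)}

lemma pairCount_avoider (hab : a + b ≤ m) (hP : ∀ e, P e ⊆ Fintype.piFinset (pairCells a b e.1 e.2))
    {i j : Fin m} (hij : i < j) :
    pairCount (avoider a b P) i j (sig a b i j).1 (sig a b i j).2 = #(P (i, j)) := by
  rw [pairCount]
  congr 1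
  ext c
  simp only [avoider, mem_filter, mem_union, mem_biUnion]
  constructor
  · rintro ⟨hc | ⟨e, he, hc⟩, hci, hcj⟩
    · exact absurd ⟨hij, hci, hcj⟩ (not_shows_of_mem_base hab hc i j)
    · rwa [eq_of_shows_of_mem_pairCells hab (mem_orderedPairs.mp he) (hP e hc) ⟨hij, hci, hcj⟩]
  · intro hc
    obtain ⟨-, hci, hcj⟩ := shows_of_mem_pairCells hij (hP (i, j) hc)
    exact ⟨Or.inr ⟨(i, j), mem_orderedPairs.mpr hij, hc⟩, hci, hcj⟩

lemma card_avoider (hab : a + b ≤ m)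
    (hP : ∀ e, P e ⊆ Fintype.piFinset (pairCells a b e.1 e.2)) :
    #(avoider a b P) = 2 ^ m + m * 2 ^ (m - 1) + ∑ e ∈ orderedPairs m, #(P e) := by
  rw [avoider, card_union_of_disjoint, card_biUnion, card_base]
  · intro e he f hf hef
    refine disjoint_left.mpr fun c hce hcf => hef ?_
    exact (eq_of_shows_of_mem_pairCells hab (mem_orderedPairs.mp he) (hP e hce)
      (shows_of_mem_pairCells (mem_orderedPairs.mp hf) (hP f hcf))).symm
  · refine (disjoint_biUnion_right _ _ _).mpr fun e he => disjoint_left.mpr fun c hc hce => ?_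
    exact not_shows_of_mem_base hab hc _ _
      (shows_of_mem_pairCells (mem_orderedPairs.mp he) (hP e hce))

end Assembly

variable {p q₀ q₁ : ℕ}

lemma cap_le (i j : Fin m) : cap a b p q₀ q₁ i j ≤ p - 1 := by
  unfold cap; split_ifs <;> omega

lemma sum_cap (hab : a + b ≤ m) (hq₀ : q₀ ≤ p - 1) (hq₁ : q₁ ≤ p - 1) :
    ∑ e ∈ orderedPairs m, cap a b p q₀ q₁ e.1 e.2 + q₀ * a.choose 2 + q₁ * b.choose 2 =
      (p - 1) * m.choose 2 := by
  have h₀ : q₀ * a.choose 2 = ∑ e ∈ orderedPairs m, if (e.2 : ℕ) < a then q₀ else 0 := by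
    rw [← sum_filter, sum_const, smul_eq_mul, card_orderedPairs_filter_lt (by omega), mul_comm]
  have h₁ : q₁ * b.choose 2 = ∑ e ∈ orderedPairs m, if m - b ≤ (e.1 : ℕ) then q₁ else 0 := by
    rw [← sum_filter, sum_const, smul_eq_mul, card_orderedPairs_filter_le (by omega), mul_comm]
  rw [h₀, h₁, ← sum_add_distrib, ← sum_add_distrib, ← card_orderedPairs, mul_comm,
    ← smul_eq_mul, ← sum_const]
  refine sum_congr rfl fun e he => ?_
  have := Fin.lt_def.mp (mem_orderedPairs.mp he)
  unfold cap
  split_ifs <;> omega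

theorem exists_avoider (hab : a + b ≤ m) (hp : 1 ≤ p) (hq₀ : q₀ ≤ p - 1) (hq₁ : q₁ ≤ p - 1)
    (hcap : p - 1 ≤ 2 ^ (a + b - 2)) :
    ∃ A : Finset (Fin m → Fin 3), ¬ ConfigIn (Fabcd (p - q₀) p p (p - q₁)) A ∧
      #A + q₀ * a.choose 2 + q₁ * b.choose 2 =
        2 ^ m + m * 2 ^ (m - 1) + (p - 1) * m.choose 2 := by
  have hP (e : Fin m × Fin m) :
      ∃ P ⊆ Fintype.piFinset (pairCells a b e.1 e.2), #P = cap a b p q₀ q₁ e.1 e.2 :=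
    exists_subset_card_eq
      ((cap_le _ _).trans (hcap.trans (two_pow_le_card_piFinset_pairCells hab _ _)))
  choose P hPsub hPcard using hP
  refine ⟨avoider a b P, ?_, ?_⟩
  · rw [configIn_Fabcd_iff]
    rintro ⟨i, j, hij, h00, h10, h01, h11⟩
    wlog hlt : i < j generalizing i j
    · rw [pairCount_comm] at h00 h10 h01 h11
      exact this j i hij.symm h00 h01 h10 h11 (hij.lt_or_gt.resolve_left hlt)
    have := (pairCount_avoider hab hPsub hlt).trans (hPcard (i, j))
    unfold sig cap at this
    split_ifs at this <;> dsimp only at this <;> omega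
  · rw [card_avoider hab hPsub, ← sum_cap hab hq₀ hq₁]
    simp only [hPcard]
    ring

end Avoider

theorem le_forb_Fabcd {m a b p q₀ q₁ : ℕ} (hab : a + b ≤ m) (hp : 1 ≤ p) (hq₀ : q₀ ≤ p - 1)
    (hq₁ : q₁ ≤ p - 1) (hcap : p - 1 ≤ 2 ^ (a + b - 2)) :
    2 ^ m + m * 2 ^ (m - 1) + (p - 1) * m.choose 2 - q₀ * a.choose 2 - q₁ * b.choose 2 ≤
      forb m 3 (Fabcd (p - q₀) p p (p - q₁)) := by
  obtain ⟨A, hA, hcard⟩ := Avoider.exists_avoider hab hp hq₀ hq₁ hcap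
  have := card_le_forb hA
  omega

theorem forb_general_lower (p q₀ q₁ r₁ r₂ m : ℕ) (hp : 2 ≤ p)
    (hq₀ : q₀ ≤ p - 1) (hq₁ : q₁ ≤ p - 1)
    (hr : r₁ + r₂ = Nat.clog 2 (p - 1))
    (hm : 2 * Nat.choose (r₁ + 1) 2 + 2 * Nat.choose (r₂ + 1) 2 + 2 ≤ m) :
    forb m 3 (pK2 p) - min q₀ q₁ * Nat.choose (r₁ + 1) 2
        - max q₀ q₁ * Nat.choose (r₂ + 1) 2
      ≤ forb m 3 (Fabcd (p - q₀) p p (p - q₁)) := by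
  have hle_choose (r : ℕ) : r ≤ (r + 1).choose 2 := by
    rw [Nat.choose_succ_succ, Nat.choose_one_right]
    omega
  have hrows : r₁ + r₂ + 2 ≤ m := by
    have := hle_choose r₁
    have := hle_choose r₂
    omega
  have hcap : p - 1 ≤ 2 ^ (r₁ + r₂) := hr ▸ Nat.le_pow_clog one_lt_two _
  have hupper := forb_pK2_le m p
  rcases le_total q₀ q₁ with h | h
  · have := le_forb_Fabcd (m := m) (p := p) (a := r₁ + 1) (b := r₂ + 1) (by omega) (by omega)
      hq₀ hq₁ (by rwa [show r₁ + 1 + (r₂ + 1) - 2 = r₁ + r₂ by omega])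
    rw [min_eq_left h, max_eq_right h]
    omega
  · have := le_forb_Fabcd (m := m) (p := p) (a := r₂ + 1) (b := r₁ + 1) (by omega) (by omega)
      hq₀ hq₁ (by rwa [show r₂ + 1 + (r₁ + 1) - 2 = r₁ + r₂ by omega])
    rw [min_eq_right h, max_eq_left h]
    omega
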